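/- Let r > 1 and α₁, C₀, β₁, β₂ > 0 be real constants. Let E : [0,∞) → [0,∞) and E₂ : [0,∞) → [0,∞) be nonincreasing and continuously differentiable, let ξ : [0,∞) → (0,∞) be nonincreasing and differentiable, let h : [0,∞) → [0,∞) be continuous, and let I : [0,∞) → ℝ be differentiable with β₁ E(t) ≤ I(t) ≤ β₂ E(t) for all t ≥ 0. Assume that ξ(t) I'(t) ≤ -α₁ ξ(t) E(t) + C₀ (-E₂'(t))^{1/r} + C₀ h(t) for all t ≥ 0. Then there exists a constant C > 0 such that for all t > 0, E(t) ≤ C · ( (E₂(0) + E(0)^r + ∫₀ᵗ h(s)^r ds) / (∫₀ᵗ ξ(s)^r ds) )^{1/r}. -/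

import Mathlib

open MeasureTheory Set intervalIntegral

open Filter Topology

lemma aux_young (r ε : ℝ) (hr : 1 < r) (hε : 0 < ε) :
    ∃ K > 0, ∀ a b : ℝ, 0 ≤ a → 0 ≤ b → a * b ≤ ε * a ^ (r / (r - 1)) + K * b ^ r := by
  have hr1 : 0 < r - 1 := by linarith
  have hr0 : 0 < r := by linarith
  set p := r / (r - 1) with hp
  have hpq : p.HolderConjugate r := ((Real.holderConjugate_iff_eq_conjExponent hr).2 hp).symm
  set c := ε ^ ((r - 1) / r) with hc
  have hcpos : 0 < c := Real.rpow_pos_of_pos hε _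
  refine ⟨c⁻¹ ^ r, Real.rpow_pos_of_pos (inv_pos.2 hcpos) _, fun a b ha hb => ?_⟩
  have key := Real.young_inequality_of_nonneg (mul_nonneg hcpos.le ha)
    (mul_nonneg (inv_nonneg.2 hcpos.le) hb) hpq
  have h1 : c * a * (c⁻¹ * b) = a * b := by field_simp
  have h2 : (c * a) ^ p = ε * a ^ p := by
    rw [Real.mul_rpow hcpos.le ha, hc, ← Real.rpow_mul hε.le]
    have hh : (r - 1) / r * p = 1 := by rw [hp]; field_simp
    rw [hh, Real.rpow_one]
  have h3 : (c⁻¹ * b) ^ r = c⁻¹ ^ r * b ^ r :=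
    Real.mul_rpow (inv_nonneg.2 hcpos.le) hb
  rw [h1, h2, h3] at key
  have hap : 0 ≤ ε * a ^ p := mul_nonneg hε.le (Real.rpow_nonneg ha _)
  have hbq : 0 ≤ c⁻¹ ^ r * b ^ r :=
    mul_nonneg (Real.rpow_nonneg (inv_nonneg.2 hcpos.le) _) (Real.rpow_nonneg hb _)
  have hple : ε * a ^ p / p ≤ ε * a ^ p := div_le_self hap hpq.lt.le
  have hqle : c⁻¹ ^ r * b ^ r / r ≤ c⁻¹ ^ r * b ^ r := div_le_self hbq hr.le
  linarith

lemma aux_deriv_nonpos {f : ℝ → ℝ} {f' x : ℝ} (hx : 0 ≤ x)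
    (hf : AntitoneOn f (Set.Ici 0)) (hd : HasDerivWithinAt f f' (Set.Ici 0) x) : f' ≤ 0 := by
  have h2 : HasDerivWithinAt f f' (Set.Ioi x) x :=
    hd.mono (fun y hy => le_trans hx (le_of_lt hy))
  rw [hasDerivWithinAt_iff_tendsto_slope' (notMem_Ioi.2 le_rfl)] at h2
  refine le_of_tendsto h2 ?_
  filter_upwards [self_mem_nhdsWithin] with y hy
  have hxy : x < y := hy
  rw [slope_def_field]
  have : f y ≤ f x := hf hx (le_trans hx hxy.le) hxy.le
  apply div_nonpos_of_nonpos_of_nonneg <;> linarith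

set_option maxHeartbeats 1600000 in
/-- Abstract differential-inequality mechanism behind Case 2 of Theorem 3. -/
theorem stmt_10 (r α₁ C₀ β₁ β₂ : ℝ) (hr : 1 < r) (hα₁ : 0 < α₁) (hC₀ : 0 < C₀)
    (hβ₁ : 0 < β₁) (hβ₂ : 0 < β₂)
    (E E' E₂ E₂' ξ h I I' : ℝ → ℝ)
    (hEnonneg : ∀ t, 0 ≤ t → 0 ≤ E t)
    (hEanti : AntitoneOn E (Set.Ici 0))
    (hEderiv : ∀ t ∈ Set.Ici (0:ℝ), HasDerivWithinAt E (E' t) (Set.Ici 0) t)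
    (hE'cont : ContinuousOn E' (Set.Ici 0))
    (hE₂nonneg : ∀ t, 0 ≤ t → 0 ≤ E₂ t)
    (hE₂anti : AntitoneOn E₂ (Set.Ici 0))
    (hE₂deriv : ∀ t ∈ Set.Ici (0:ℝ), HasDerivWithinAt E₂ (E₂' t) (Set.Ici 0) t)
    (hE₂'cont : ContinuousOn E₂' (Set.Ici 0))
    (hξpos : ∀ t, 0 ≤ t → 0 < ξ t)
    (hξanti : AntitoneOn ξ (Set.Ici 0))
    (hξdiff : ∀ t ∈ Set.Ici (0:ℝ), DifferentiableWithinAt ℝ ξ (Set.Ici 0) t)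
    (hhcont : ContinuousOn h (Set.Ici 0))
    (hhnonneg : ∀ t, 0 ≤ t → 0 ≤ h t)
    (hIderiv : ∀ t ∈ Set.Ici (0:ℝ), HasDerivWithinAt I (I' t) (Set.Ici 0) t)
    (hIlow : ∀ t, 0 ≤ t → β₁ * E t ≤ I t)
    (hIhigh : ∀ t, 0 ≤ t → I t ≤ β₂ * E t)
    (hineq : ∀ t, 0 ≤ t →
      ξ t * I' t ≤ -α₁ * ξ t * E t + C₀ * (-(E₂' t)) ^ (1 / r) + C₀ * h t) :
    ∃ C > 0, ∀ t, 0 < t →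
      E t ≤ C * ((E₂ 0 + (E 0) ^ r + ∫ s in (0:ℝ)..t, (h s) ^ r) /
                  (∫ s in (0:ℝ)..t, (ξ s) ^ r)) ^ (1 / r) := by
  have hr0 : (0:ℝ) < r := by linarith
  have hr1 : (0:ℝ) < r - 1 := by linarith
  have hrne : r ≠ 0 := ne_of_gt hr0
  have hξ0pos : 0 < ξ 0 := hξpos 0 le_rfl
  obtain ⟨K, hKpos, hK⟩ := aux_young r (α₁ / 4) hr (by positivity)
  set K' : ℝ := K * C₀ ^ r with hK'def
  have hK'pos : 0 < K' := mul_pos hKpos (Real.rpow_pos_of_pos hC₀ r)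
  set K1 : ℝ := ξ 0 ^ r * 2 ^ (r - 1) * β₂ with hK1def
  have hK1pos : 0 < K1 := by
    have h1 := Real.rpow_pos_of_pos hξ0pos r
    have h2 := Real.rpow_pos_of_pos (two_pos (α := ℝ)) (r - 1)
    positivity
  set K3 : ℝ := (2 / α₁) * max K1 K' with hK3def
  have hK3pos : 0 < K3 := mul_pos (by positivity) (lt_of_lt_of_le hK1pos (le_max_left _ _))
  refine ⟨max 1 (K3 ^ (1 / r)), lt_of_lt_of_le one_pos (le_max_left _ _), ?_⟩
  intro t ht
  -- continuity of the data
  have hEcont : ContinuousOn E (Ici 0) := fun x hx => (hEderiv x hx).continuousWithinAt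
  have hE₂cont : ContinuousOn E₂ (Ici 0) := fun x hx => (hE₂deriv x hx).continuousWithinAt
  have hIcont : ContinuousOn I (Ici 0) := fun x hx => (hIderiv x hx).continuousWithinAt
  have hξcont : ContinuousOn ξ (Ici 0) := fun x hx => (hξdiff x hx).continuousWithinAt
  have hIccsub : Icc (0:ℝ) t ⊆ Ici 0 := fun x hx => hx.1
  have huIcc : uIcc (0:ℝ) t = Icc 0 t := uIcc_of_le ht.le
  have mkInt : ∀ {f : ℝ → ℝ}, ContinuousOn f (Icc 0 t) → IntervalIntegrable f volume 0 t :=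
    fun hf => ContinuousOn.intervalIntegrable (by rw [huIcc]; exact hf)
  have hcξr : ContinuousOn (fun s => ξ s ^ r) (Icc 0 t) :=
    (hξcont.mono hIccsub).rpow_const (fun x hx => Or.inl (ne_of_gt (hξpos x hx.1)))
  have hchr : ContinuousOn (fun s => h s ^ r) (Icc 0 t) :=
    (hhcont.mono hIccsub).rpow_const (fun _ _ => Or.inr hr0.le)
  have hcEr : ContinuousOn (fun s => ξ s ^ r * E s ^ r) (Icc 0 t) :=
    hcξr.mul ((hEcont.mono hIccsub).rpow_const (fun _ _ => Or.inr hr0.le))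
  have hiξr : IntervalIntegrable (fun s => ξ s ^ r) volume 0 t := mkInt hcξr
  have hihr : IntervalIntegrable (fun s => h s ^ r) volume 0 t := mkInt hchr
  have hiEr : IntervalIntegrable (fun s => ξ s ^ r * E s ^ r) volume 0 t := mkInt hcEr
  have hD : 0 < ∫ s in (0:ℝ)..t, ξ s ^ r :=
    intervalIntegral_pos_of_pos_on hiξr
      (fun x hx => Real.rpow_pos_of_pos (hξpos x hx.1.le) r) ht
  have hH : 0 ≤ ∫ s in (0:ℝ)..t, h s ^ r :=
    intervalIntegral.integral_nonneg ht.le (fun u hu => Real.rpow_nonneg (hhnonneg u hu.1) r)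
  have hN : 0 ≤ E₂ 0 + E 0 ^ r + ∫ s in (0:ℝ)..t, h s ^ r := by
    have h1 := hE₂nonneg 0 le_rfl
    have h2 := Real.rpow_nonneg (hEnonneg 0 le_rfl) r
    linarith
  have hNDnn : 0 ≤ (E₂ 0 + E 0 ^ r + ∫ s in (0:ℝ)..t, h s ^ r) / ∫ s in (0:ℝ)..t, ξ s ^ r :=
    div_nonneg hN hD.le
  by_cases hE0 : E 0 = 0
  · have hEt : E t = 0 :=
      le_antisymm (hE0 ▸ hEanti self_mem_Ici (mem_Ici.2 ht.le) ht.le) (hEnonneg t ht.le)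
    rw [hEt]
    exact mul_nonneg (le_trans zero_le_one (le_max_left _ _)) (Real.rpow_nonneg hNDnn _)
  have hE0pos : 0 < E 0 := lt_of_le_of_ne (hEnonneg 0 le_rfl) (Ne.symm hE0)
  set M0 : ℝ := ξ 0 ^ r * (2 * E 0) ^ (r - 1) with hM0def
  have hM0pos : 0 < M0 :=
    mul_pos (Real.rpow_pos_of_pos hξ0pos r) (Real.rpow_pos_of_pos (by linarith) _)
  -- Step A : the basic integral estimate for every small δ > 0
  have stepA : ∀ δ : ℝ, 0 < δ → δ ≤ E 0 →
      (α₁ / 2) * (∫ s in (0:ℝ)..t, ξ s ^ r * E s ^ r) ≤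
        K1 * E 0 ^ r + K' * E₂ 0 + K' * (∫ s in (0:ℝ)..t, h s ^ r) + α₁ * M0 * t * δ := by
    intro δ hδ hδE
    have hδ0 : ∀ x, 0 ≤ x → 0 < E x + δ := fun x hx =>
      add_pos_of_nonneg_of_pos (hEnonneg x hx) hδ
    set c₀ : ℝ := α₁ * M0 * δ with hc₀def
    -- continuity on Icc 0 t and on Ioi 0
    have hcG : ContinuousOn (fun u => ξ u ^ r * (E u + δ) ^ (r - 1)) (Icc 0 t) :=
      hcξr.mul (((hEcont.mono hIccsub).add continuousOn_const).rpow_const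
        (fun x hx => Or.inl (ne_of_gt (hδ0 x hx.1))))
    have hcEδ : ContinuousOn (fun s => ξ s ^ r * (E s + δ) ^ r) (Icc 0 t) :=
      hcξr.mul (((hEcont.mono hIccsub).add continuousOn_const).rpow_const
        (fun _ _ => Or.inr hr0.le))
    have hcEδ' : ContinuousOn (fun s => ξ s ^ r * (E s + δ) ^ r) (Ioi 0) :=
      ((hξcont.mono Ioi_subset_Ici_self).rpow_const
          (fun x hx => Or.inl (ne_of_gt (hξpos x (le_of_lt hx))))).mul
        (((hEcont.mono Ioi_subset_Ici_self).add continuousOn_const).rpow_const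
          (fun _ _ => Or.inr hr0.le))
    have hchr' : ContinuousOn (fun s => h s ^ r) (Ioi 0) :=
      (hhcont.mono Ioi_subset_Ici_self).rpow_const (fun _ _ => Or.inr hr0.le)
    have hiEδ : IntervalIntegrable (fun s => ξ s ^ r * (E s + δ) ^ r) volume 0 t := mkInt hcEδ
    -- continuity of Ψ
    have hprim1 : ContinuousOn (fun u => ∫ s in (0:ℝ)..u, ξ s ^ r * (E s + δ) ^ r) (Icc 0 t) := by
      have := intervalIntegral.continuousOn_primitive_interval
        (f := fun s => ξ s ^ r * (E s + δ) ^ r) (a := (0:ℝ)) (b := t) (μ := volume)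
        (by rw [huIcc]; exact hcEδ.integrableOn_Icc)
      rwa [huIcc] at this
    have hprim2 : ContinuousOn (fun u => ∫ s in (0:ℝ)..u, h s ^ r) (Icc 0 t) := by
      have := intervalIntegral.continuousOn_primitive_interval
        (f := fun s => h s ^ r) (a := (0:ℝ)) (b := t) (μ := volume)
        (by rw [huIcc]; exact hchr.integrableOn_Icc)
      rwa [huIcc] at this
    have hcΨ : ContinuousOn (fun u => (ξ u ^ r * (E u + δ) ^ (r - 1)) * I u
        + (α₁ / 2) * (∫ s in (0:ℝ)..u, ξ s ^ r * (E s + δ) ^ r)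
        + K' * E₂ u - K' * (∫ s in (0:ℝ)..u, h s ^ r) - c₀ * u) (Icc 0 t) := by
      exact ((((hcG.mul (hIcont.mono hIccsub)).add (continuousOn_const.mul hprim1)).add
        (continuousOn_const.mul (hE₂cont.mono hIccsub))).sub
        (continuousOn_const.mul hprim2)).sub (continuousOn_const.mul continuousOn_id)
    -- key derivative estimate
    have keyDeriv : ∀ x ∈ Ioo (0:ℝ) t,
        ∃ v, HasDerivAt (fun u => (ξ u ^ r * (E u + δ) ^ (r - 1)) * I u
          + (α₁ / 2) * (∫ s in (0:ℝ)..u, ξ s ^ r * (E s + δ) ^ r)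
          + K' * E₂ u - K' * (∫ s in (0:ℝ)..u, h s ^ r) - c₀ * u) v x ∧ v ≤ 0 := by
      intro x hx
      have hx0 : 0 < x := hx.1
      have hx0' : (0:ℝ) ≤ x := hx0.le
      have hmem : x ∈ Ici (0:ℝ) := hx0'
      have hnhds : Ici (0:ℝ) ∈ 𝓝 x := Ici_mem_nhds hx0
      have hEx : HasDerivAt E (E' x) x := (hEderiv x hmem).hasDerivAt hnhds
      have hE₂x : HasDerivAt E₂ (E₂' x) x := (hE₂deriv x hmem).hasDerivAt hnhds
      have hIx : HasDerivAt I (I' x) x := (hIderiv x hmem).hasDerivAt hnhds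
      have hξx : HasDerivAt ξ (deriv ξ x) x :=
        ((hξdiff x hmem).differentiableAt hnhds).hasDerivAt
      have hξxpos : 0 < ξ x := hξpos x hx0'
      have hex : 0 < E x + δ := hδ0 x hx0'
      have hG1 : HasDerivAt (fun u => ξ u ^ r) (deriv ξ x * r * ξ x ^ (r - 1)) x :=
        hξx.rpow_const (Or.inl (ne_of_gt hξxpos))
      have hG2 : HasDerivAt (fun u => (E u + δ) ^ (r - 1))
          (E' x * (r - 1) * (E x + δ) ^ (r - 1 - 1)) x :=
        (hEx.add_const δ).rpow_const (Or.inl (ne_of_gt hex))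
      have hG : HasDerivAt (fun u => ξ u ^ r * (E u + δ) ^ (r - 1))
          (deriv ξ x * r * ξ x ^ (r - 1) * (E x + δ) ^ (r - 1)
            + ξ x ^ r * (E' x * (r - 1) * (E x + δ) ^ (r - 1 - 1))) x := hG1.mul hG2
      have hGI : HasDerivAt (fun u => (ξ u ^ r * (E u + δ) ^ (r - 1)) * I u)
          ((deriv ξ x * r * ξ x ^ (r - 1) * (E x + δ) ^ (r - 1)
            + ξ x ^ r * (E' x * (r - 1) * (E x + δ) ^ (r - 1 - 1))) * I x
            + (ξ x ^ r * (E x + δ) ^ (r - 1)) * I' x) x := hG.mul hIx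
      have hmeas1 : StronglyMeasurableAtFilter (fun s => ξ s ^ r * (E s + δ) ^ r) (𝓝 x) volume :=
        ContinuousOn.stronglyMeasurableAtFilter isOpen_Ioi hcEδ' x hx0
      have hmeas2 : StronglyMeasurableAtFilter (fun s => h s ^ r) (𝓝 x) volume :=
        ContinuousOn.stronglyMeasurableAtFilter isOpen_Ioi hchr' x hx0
      have hsub : uIcc (0:ℝ) x ⊆ uIcc (0:ℝ) t := by
        rw [uIcc_of_le hx0', uIcc_of_le ht.le]
        exact Icc_subset_Icc_right hx.2.le
      have hP1 : HasDerivAt (fun u => ∫ s in (0:ℝ)..u, ξ s ^ r * (E s + δ) ^ r)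
          (ξ x ^ r * (E x + δ) ^ r) x :=
        intervalIntegral.integral_hasDerivAt_right (hiEδ.mono_set hsub) hmeas1
          (hcEδ'.continuousAt (Ioi_mem_nhds hx0))
      have hP2 : HasDerivAt (fun u => ∫ s in (0:ℝ)..u, h s ^ r) (h x ^ r) x :=
        intervalIntegral.integral_hasDerivAt_right (hihr.mono_set hsub) hmeas2
          (hchr'.continuousAt (Ioi_mem_nhds hx0))
      have hlin : HasDerivAt (fun u => c₀ * u) c₀ x := by
        simpa using (hasDerivAt_id x).const_mul c₀
      refine ⟨_, (((hGI.add (hP1.const_mul (α₁ / 2))).add (hE₂x.const_mul K')).sub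
        (hP2.const_mul K')).sub hlin, ?_⟩
      -- now prove the derivative value is ≤ 0
      have hE'x : E' x ≤ 0 := aux_deriv_nonpos hx0' hEanti (hEderiv x hmem)
      have hE₂'x : E₂' x ≤ 0 := aux_deriv_nonpos hx0' hE₂anti (hE₂deriv x hmem)
      have hdξ : deriv ξ x ≤ 0 := aux_deriv_nonpos hx0' hξanti hξx.hasDerivWithinAt
      have hIxnn : 0 ≤ I x := le_trans (mul_nonneg hβ₁.le (hEnonneg x hx0')) (hIlow x hx0')
      have q1 : (0:ℝ) ≤ ξ x ^ (r - 1) := Real.rpow_nonneg hξxpos.le _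
      have q2 : (0:ℝ) ≤ (E x + δ) ^ (r - 1) := Real.rpow_nonneg hex.le _
      have q3 : (0:ℝ) ≤ (E x + δ) ^ (r - 1 - 1) := Real.rpow_nonneg hex.le _
      have q4 : (0:ℝ) ≤ ξ x ^ r := Real.rpow_nonneg hξxpos.le _
      have hg1 : deriv ξ x * r * ξ x ^ (r - 1) * (E x + δ) ^ (r - 1) ≤ 0 := by
        have hz : (0:ℝ) ≤ r * (ξ x ^ (r - 1) * (E x + δ) ^ (r - 1)) :=
          mul_nonneg hr0.le (mul_nonneg q1 q2)
        have hzz : deriv ξ x * (r * (ξ x ^ (r - 1) * (E x + δ) ^ (r - 1))) ≤ 0 :=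
          mul_nonpos_iff.2 (Or.inr ⟨hdξ, hz⟩)
        calc deriv ξ x * r * ξ x ^ (r - 1) * (E x + δ) ^ (r - 1)
            = deriv ξ x * (r * (ξ x ^ (r - 1) * (E x + δ) ^ (r - 1))) := by ring
          _ ≤ 0 := hzz
      have hg2 : ξ x ^ r * (E' x * (r - 1) * (E x + δ) ^ (r - 1 - 1)) ≤ 0 := by
        have hz : (0:ℝ) ≤ ξ x ^ r * ((r - 1) * (E x + δ) ^ (r - 1 - 1)) :=
          mul_nonneg q4 (mul_nonneg hr1.le q3)
        have hzz : E' x * (ξ x ^ r * ((r - 1) * (E x + δ) ^ (r - 1 - 1))) ≤ 0 :=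
          mul_nonpos_iff.2 (Or.inr ⟨hE'x, hz⟩)
        calc ξ x ^ r * (E' x * (r - 1) * (E x + δ) ^ (r - 1 - 1))
            = E' x * (ξ x ^ r * ((r - 1) * (E x + δ) ^ (r - 1 - 1))) := by ring
          _ ≤ 0 := hzz
      have hg'I : (deriv ξ x * r * ξ x ^ (r - 1) * (E x + δ) ^ (r - 1)
          + ξ x ^ r * (E' x * (r - 1) * (E x + δ) ^ (r - 1 - 1))) * I x ≤ 0 :=
        mul_nonpos_iff.2 (Or.inr ⟨by linarith, hIxnn⟩)
      -- the multiplied basic inequality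
      have ha : 0 ≤ ξ x ^ (r - 1) * (E x + δ) ^ (r - 1) := mul_nonneg q1 q2
      have hmul := mul_le_mul_of_nonneg_left (hineq x hx0') ha
      have hξr : ξ x ^ r = ξ x ^ (r - 1) * ξ x := by
        rw [← Real.rpow_add_one (ne_of_gt hξxpos) (r - 1), sub_add_cancel]
      have hEδr : (E x + δ) ^ r = (E x + δ) ^ (r - 1) * (E x + δ) := by
        rw [← Real.rpow_add_one (ne_of_gt hex) (r - 1), sub_add_cancel]
      have hXnn : 0 ≤ -(E₂' x) := neg_nonneg.2 hE₂'x
      have hXr : ((-(E₂' x)) ^ (1 / r : ℝ)) ^ r = -(E₂' x) := by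
        rw [← Real.rpow_mul hXnn, one_div, inv_mul_cancel₀ hrne, Real.rpow_one]
      have hap : (ξ x ^ (r - 1) * (E x + δ) ^ (r - 1)) ^ (r / (r - 1)) =
          ξ x ^ r * (E x + δ) ^ r := by
        rw [Real.mul_rpow q1 q2, ← Real.rpow_mul hξxpos.le, ← Real.rpow_mul hex.le]
        have hh : (r - 1) * (r / (r - 1)) = r := by field_simp
        rw [hh]
      have hy1 := hK (ξ x ^ (r - 1) * (E x + δ) ^ (r - 1)) (C₀ * (-(E₂' x)) ^ (1 / r : ℝ))
        ha (mul_nonneg hC₀.le (Real.rpow_nonneg hXnn _))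
      have hCXr : (C₀ * (-(E₂' x)) ^ (1 / r : ℝ)) ^ r = C₀ ^ r * (-(E₂' x)) := by
        rw [Real.mul_rpow hC₀.le (Real.rpow_nonneg hXnn _), hXr]
      have hy2 := hK (ξ x ^ (r - 1) * (E x + δ) ^ (r - 1)) (C₀ * h x)
        ha (mul_nonneg hC₀.le (hhnonneg x hx0'))
      have hChr : (C₀ * h x) ^ r = C₀ ^ r * h x ^ r :=
        Real.mul_rpow hC₀.le (hhnonneg x hx0')
      rw [hap, hCXr] at hy1
      rw [hap, hChr] at hy2
      -- algebraic identities
      have eq0 : ξ x ^ (r - 1) * (E x + δ) ^ (r - 1) *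
          (-α₁ * ξ x * E x + C₀ * (-(E₂' x)) ^ (1 / r : ℝ) + C₀ * h x)
          = -α₁ * (ξ x ^ r * (E x + δ) ^ r) + α₁ * δ * (ξ x ^ r * (E x + δ) ^ (r - 1))
            + (ξ x ^ (r - 1) * (E x + δ) ^ (r - 1)) * (C₀ * (-(E₂' x)) ^ (1 / r : ℝ))
            + (ξ x ^ (r - 1) * (E x + δ) ^ (r - 1)) * (C₀ * h x) := by
        rw [hξr, hEδr]; ring
      have eqG : (ξ x ^ r * (E x + δ) ^ (r - 1)) * I' x
          = ξ x ^ (r - 1) * (E x + δ) ^ (r - 1) * (ξ x * I' x) := by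
        rw [hξr]; ring
      -- bound on the δ-term
      have hM0b : ξ x ^ r * (E x + δ) ^ (r - 1) ≤ M0 := by
        rw [hM0def]
        apply mul_le_mul
          (Real.rpow_le_rpow hξxpos.le (hξanti self_mem_Ici hmem hx0') hr0.le)
          (Real.rpow_le_rpow hex.le
            (by have := hEanti self_mem_Ici hmem hx0'; linarith) hr1.le)
          q2 (Real.rpow_nonneg hξ0pos.le _)
      have hv : α₁ * δ * (ξ x ^ r * (E x + δ) ^ (r - 1)) ≤ α₁ * M0 * δ := by
        calc α₁ * δ * (ξ x ^ r * (E x + δ) ^ (r - 1))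
            ≤ α₁ * δ * M0 := mul_le_mul_of_nonneg_left hM0b (mul_pos hα₁ hδ).le
          _ = α₁ * M0 * δ := by ring
      have hmain : (ξ x ^ r * (E x + δ) ^ (r - 1)) * I' x ≤
          -(α₁ / 2) * (ξ x ^ r * (E x + δ) ^ r) + K * (C₀ ^ r * (-(E₂' x)))
            + K * (C₀ ^ r * h x ^ r) + α₁ * M0 * δ := by
        rw [eqG]
        calc ξ x ^ (r - 1) * (E x + δ) ^ (r - 1) * (ξ x * I' x)
            ≤ ξ x ^ (r - 1) * (E x + δ) ^ (r - 1) *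
              (-α₁ * ξ x * E x + C₀ * (-(E₂' x)) ^ (1 / r : ℝ) + C₀ * h x) := hmul
          _ = -α₁ * (ξ x ^ r * (E x + δ) ^ r) + α₁ * δ * (ξ x ^ r * (E x + δ) ^ (r - 1))
              + (ξ x ^ (r - 1) * (E x + δ) ^ (r - 1)) * (C₀ * (-(E₂' x)) ^ (1 / r : ℝ))
              + (ξ x ^ (r - 1) * (E x + δ) ^ (r - 1)) * (C₀ * h x) := eq0
          _ ≤ -(α₁ / 2) * (ξ x ^ r * (E x + δ) ^ r) + K * (C₀ ^ r * (-(E₂' x)))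
              + K * (C₀ ^ r * h x ^ r) + α₁ * M0 * δ := by linarith [hy1, hy2, hv]
      have eK1 : K * (C₀ ^ r * (-(E₂' x))) = K' * (-(E₂' x)) := by rw [hK'def]; ring
      have eK2 : K * (C₀ ^ r * h x ^ r) = K' * (h x ^ r) := by rw [hK'def]; ring
      have ec : c₀ = α₁ * M0 * δ := hc₀def
      linarith [hg'I, hmain]
    -- Ψ is antitone on [0, t]
    have hanti : AntitoneOn (fun u => (ξ u ^ r * (E u + δ) ^ (r - 1)) * I u
        + (α₁ / 2) * (∫ s in (0:ℝ)..u, ξ s ^ r * (E s + δ) ^ r)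
        + K' * E₂ u - K' * (∫ s in (0:ℝ)..u, h s ^ r) - c₀ * u) (Icc 0 t) := by
      apply antitoneOn_of_deriv_nonpos (convex_Icc 0 t) hcΨ
      · intro x hx
        rw [interior_Icc] at hx
        obtain ⟨v, hd, _⟩ := keyDeriv x hx
        exact hd.differentiableAt.differentiableWithinAt
      · intro x hx
        rw [interior_Icc] at hx
        obtain ⟨v, hd, hv⟩ := keyDeriv x hx
        rw [hd.deriv]; exact hv
    have hΨle := hanti (left_mem_Icc.2 ht.le) (right_mem_Icc.2 ht.le) ht.le
    simp only [intervalIntegral.integral_same, mul_zero, sub_zero, add_zero] at hΨle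
    -- extract the estimate
    have hGtIt : 0 ≤ (ξ t ^ r * (E t + δ) ^ (r - 1)) * I t :=
      mul_nonneg (mul_nonneg (Real.rpow_nonneg (hξpos t ht.le).le _)
        (Real.rpow_nonneg (hδ0 t ht.le).le _))
        (le_trans (mul_nonneg hβ₁.le (hEnonneg t ht.le)) (hIlow t ht.le))
    have hE₂t : 0 ≤ K' * E₂ t := mul_nonneg hK'pos.le (hE₂nonneg t ht.le)
    -- G 0 * I 0 ≤ K1 * E 0 ^ r
    have hI0 : I 0 ≤ β₂ * E 0 := hIhigh 0 le_rfl
    have hG0nn : 0 ≤ ξ 0 ^ r * (E 0 + δ) ^ (r - 1) :=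
      mul_nonneg (Real.rpow_nonneg hξ0pos.le _) (Real.rpow_nonneg (hδ0 0 le_rfl).le _)
    have h2E0 : (2 * E 0) ^ (r - 1 : ℝ) = 2 ^ (r - 1 : ℝ) * E 0 ^ (r - 1 : ℝ) :=
      Real.mul_rpow (by norm_num) hE0pos.le
    have hE0r : E 0 ^ (r - 1 : ℝ) * E 0 = E 0 ^ r := by
      rw [← Real.rpow_add_one (ne_of_gt hE0pos) (r - 1), sub_add_cancel]
    have hG0I0 : (ξ 0 ^ r * (E 0 + δ) ^ (r - 1)) * I 0 ≤ K1 * E 0 ^ r := by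
      calc (ξ 0 ^ r * (E 0 + δ) ^ (r - 1)) * I 0
          ≤ (ξ 0 ^ r * (E 0 + δ) ^ (r - 1)) * (β₂ * E 0) := by
            apply mul_le_mul_of_nonneg_left _ hG0nn
            calc I 0 ≤ β₂ * E 0 := hI0
              _ = β₂ * E 0 := rfl
        _ ≤ (ξ 0 ^ r * (2 * E 0) ^ (r - 1 : ℝ)) * (β₂ * E 0) := by
            apply mul_le_mul_of_nonneg_right _ (mul_nonneg hβ₂.le hE0pos.le)
            apply mul_le_mul_of_nonneg_left _ (Real.rpow_nonneg hξ0pos.le _)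
            exact Real.rpow_le_rpow (hδ0 0 le_rfl).le (by linarith) hr1.le
        _ = K1 * E 0 ^ r := by
            rw [h2E0, hK1def]
            linear_combination (ξ 0 ^ r * 2 ^ (r - 1 : ℝ) * β₂) * hE0r
    have hJle : (∫ s in (0:ℝ)..t, ξ s ^ r * E s ^ r) ≤
        ∫ s in (0:ℝ)..t, ξ s ^ r * (E s + δ) ^ r := by
      apply intervalIntegral.integral_mono_on ht.le hiEr hiEδ
      intro x hx
      apply mul_le_mul_of_nonneg_left _ (Real.rpow_nonneg (hξpos x hx.1).le _)
      exact Real.rpow_le_rpow (hEnonneg x hx.1) (by linarith) hr0.le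
    have ect : c₀ * t = α₁ * M0 * t * δ := by rw [hc₀def]; ring
    have hJle2 : (α₁ / 2) * (∫ s in (0:ℝ)..t, ξ s ^ r * E s ^ r) ≤
        (α₁ / 2) * (∫ s in (0:ℝ)..t, ξ s ^ r * (E s + δ) ^ r) :=
      mul_le_mul_of_nonneg_left hJle (by positivity)
    linarith [hΨle, hGtIt, hE₂t, hG0I0, hJle2]
  -- remove δ
  have stepB : (α₁ / 2) * (∫ s in (0:ℝ)..t, ξ s ^ r * E s ^ r) ≤
      K1 * E 0 ^ r + K' * E₂ 0 + K' * (∫ s in (0:ℝ)..t, h s ^ r) := by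
    by_contra hcon
    push_neg at hcon
    set A := (α₁ / 2) * (∫ s in (0:ℝ)..t, ξ s ^ r * E s ^ r) with hA
    set B := K1 * E 0 ^ r + K' * E₂ 0 + K' * (∫ s in (0:ℝ)..t, h s ^ r) with hB
    have hc : 0 < α₁ * M0 * t := by positivity
    set δ := min (E 0) ((A - B) / (2 * (α₁ * M0 * t))) with hδdef
    have hδpos : 0 < δ := lt_min hE0pos (by apply div_pos; linarith; positivity)
    have h1 := stepA δ hδpos (min_le_left _ _)
    have h2 : α₁ * M0 * t * δ ≤ (A - B) / 2 := by
      have h3 : δ ≤ (A - B) / (2 * (α₁ * M0 * t)) := min_le_right _ _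
      calc α₁ * M0 * t * δ ≤ α₁ * M0 * t * ((A - B) / (2 * (α₁ * M0 * t))) :=
            mul_le_mul_of_nonneg_left h3 hc.le
        _ = (A - B) / 2 := by field_simp
    linarith
  -- conclude
  have hintEr_le : (∫ s in (0:ℝ)..t, ξ s ^ r * E s ^ r) ≤
      K3 * (E₂ 0 + E 0 ^ r + ∫ s in (0:ℝ)..t, h s ^ r) := by
    have h1 : K1 ≤ max K1 K' := le_max_left _ _
    have h2 : K' ≤ max K1 K' := le_max_right _ _
    have hE0rnn : 0 ≤ E 0 ^ r := Real.rpow_nonneg hE0pos.le _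
    have hE₂0nn := hE₂nonneg 0 le_rfl
    have hBle : K1 * E 0 ^ r + K' * E₂ 0 + K' * (∫ s in (0:ℝ)..t, h s ^ r) ≤
        max K1 K' * (E₂ 0 + E 0 ^ r + ∫ s in (0:ℝ)..t, h s ^ r) := by
      have p1 := mul_le_mul_of_nonneg_right h1 hE0rnn
      have p2 := mul_le_mul_of_nonneg_right h2 hE₂0nn
      have p3 := mul_le_mul_of_nonneg_right h2 hH
      have : max K1 K' * (E₂ 0 + E 0 ^ r + ∫ s in (0:ℝ)..t, h s ^ r) =
          max K1 K' * E₂ 0 + max K1 K' * E 0 ^ r + max K1 K' *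
            (∫ s in (0:ℝ)..t, h s ^ r) := by ring
      linarith
    have hstep := le_trans stepB hBle
    have hmul2 := mul_le_mul_of_nonneg_left hstep (by positivity : (0:ℝ) ≤ 2 / α₁)
    have hl : (2 / α₁) * ((α₁ / 2) * (∫ s in (0:ℝ)..t, ξ s ^ r * E s ^ r)) =
        ∫ s in (0:ℝ)..t, ξ s ^ r * E s ^ r := by field_simp
    have hrr : K3 * (E₂ 0 + E 0 ^ r + ∫ s in (0:ℝ)..t, h s ^ r) =
        (2 / α₁) * (max K1 K' * (E₂ 0 + E 0 ^ r + ∫ s in (0:ℝ)..t, h s ^ r)) := by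
      rw [hK3def]; ring
    linarith
  have hmono : E t ^ r * (∫ s in (0:ℝ)..t, ξ s ^ r) ≤ ∫ s in (0:ℝ)..t, ξ s ^ r * E s ^ r := by
    have h1 : (∫ s in (0:ℝ)..t, E t ^ r * ξ s ^ r) ≤ ∫ s in (0:ℝ)..t, ξ s ^ r * E s ^ r := by
      apply intervalIntegral.integral_mono_on ht.le (hiξr.const_mul _) hiEr
      intro x hx
      have hEts : E t ≤ E x := hEanti (hIccsub hx) (mem_Ici.2 ht.le) hx.2
      calc E t ^ r * ξ x ^ r = ξ x ^ r * E t ^ r := mul_comm _ _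
        _ ≤ ξ x ^ r * E x ^ r := mul_le_mul_of_nonneg_left
            (Real.rpow_le_rpow (hEnonneg t ht.le) hEts hr0.le)
            (Real.rpow_nonneg (hξpos x hx.1).le _)
    rwa [intervalIntegral.integral_const_mul] at h1
  have hEtr : E t ^ r ≤ K3 * ((E₂ 0 + E 0 ^ r + ∫ s in (0:ℝ)..t, h s ^ r) /
      ∫ s in (0:ℝ)..t, ξ s ^ r) := by
    rw [← mul_div_assoc, le_div_iff₀ hD]
    calc E t ^ r * ∫ s in (0:ℝ)..t, ξ s ^ r ≤ ∫ s in (0:ℝ)..t, ξ s ^ r * E s ^ r := hmono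
      _ ≤ K3 * (E₂ 0 + E 0 ^ r + ∫ s in (0:ℝ)..t, h s ^ r) := hintEr_le
  have h9 : (E t ^ r) ^ (1 / r : ℝ) = E t := by
    rw [← Real.rpow_mul (hEnonneg t ht.le), mul_one_div_cancel hrne, Real.rpow_one]
  calc E t = (E t ^ r) ^ (1 / r : ℝ) := h9.symm
    _ ≤ (K3 * ((E₂ 0 + E 0 ^ r + ∫ s in (0:ℝ)..t, h s ^ r) /
          ∫ s in (0:ℝ)..t, ξ s ^ r)) ^ (1 / r : ℝ) :=
        Real.rpow_le_rpow (Real.rpow_nonneg (hEnonneg t ht.le) r) hEtr (by positivity)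
    _ = K3 ^ (1 / r : ℝ) * ((E₂ 0 + E 0 ^ r + ∫ s in (0:ℝ)..t, h s ^ r) /
          ∫ s in (0:ℝ)..t, ξ s ^ r) ^ (1 / r : ℝ) := Real.mul_rpow hK3pos.le hNDnn
    _ ≤ max 1 (K3 ^ (1 / r : ℝ)) * ((E₂ 0 + E 0 ^ r + ∫ s in (0:ℝ)..t, h s ^ r) /
          ∫ s in (0:ℝ)..t, ξ s ^ r) ^ (1 / r : ℝ) :=
        mul_le_mul_of_nonneg_right (le_max_right _ _) (Real.rpow_nonneg hNDnn _)
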